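/- Let $\mathscr{S}$ be a collection of sets, each containing a subset $E_Q$ with $|Q| \le \tau |E_Q|$ and the $E_Q$ pairwise disjoint, and suppose the sets in $\mathscr{S}$ contained in a fixed $Q_0 \in \mathscr{S}$ satisfy the nesting property of a dyadic lattice. Let $\sigma$ be a weight and $M f := \sup_{Q \in \mathscr{S}} \langle |f| \rangle_Q \mathbf{1}_Q$. Then $\sum_{Q \in \mathscr{S},\, Q \subseteq Q_0} \langle \sigma \rangle_Q\, |Q| \le \tau \int_{Q_0} M(\sigma \mathbf{1}_{Q_0}) \le \tau\, [\sigma]_{B_\infty}\, \sigma(Q_0)$, where $[\sigma]_{B_\infty} := \sup_{Q \in \mathscr{S}} \sigma(Q)^{-1} \int_Q M(\sigma \mathbf{1}_Q)$. -/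

import Mathlib

open MeasureTheory ENNReal Set

noncomputable def avg {X : Type*} [MeasurableSpace X] (μ : Measure X) (Q : Set X)
    (f : X → ℝ≥0∞) : ℝ≥0∞ := (∫⁻ x in Q, f x ∂μ) / μ Q

/-- The maximal operator `M` of the family `S`. -/
noncomputable def maxS {X ι : Type*} [MeasurableSpace X] (μ : Measure X)
    (S : ι → Set X) (f : X → ℝ≥0∞) (x : X) : ℝ≥0∞ :=
  ⨆ i, Set.indicator (S i) (fun _ => avg μ (S i) f) x

/-!
Each average `⟨σ⟩_Q` with `Q ⊆ Q₀` is also the average of `σ 1_{Q₀}` over `Q`, hence is bounded by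
`M(σ 1_{Q₀})` at every point of `Q`, in particular on `E_Q`. Sparseness trades `|Q|` for `τ |E_Q|`,
so each term is at most `τ ∫_{E_Q} M(σ 1_{Q₀})`, and disjointness of the `E_Q ⊆ Q₀` sums these
to `τ ∫_{Q₀} M(σ 1_{Q₀})`. The second inequality is the `Q₀`-term of the supremum defining
`[σ]_{B_∞}`.
-/

section

variable {X ι : Type*} [MeasurableSpace X] {μ : Measure X}

theorem avg_indicator_of_subset {Q T : Set X} (hQ : MeasurableSet Q) (hQT : Q ⊆ T)
    (f : X → ℝ≥0∞) : avg μ Q (T.indicator f) = avg μ Q f := by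
  unfold avg
  rw [setLIntegral_congr_fun hQ fun x hx => indicator_of_mem (hQT hx) f]

theorem avg_le_maxS (S : ι → Set X) (f : X → ℝ≥0∞) {i : ι} {x : X} (hx : x ∈ S i) :
    avg μ (S i) f ≤ maxS μ S f x := by
  refine le_iSup_of_le i (le_of_eq ?_)
  rw [indicator_of_mem hx]

theorem avg_mul_le_setLIntegral_maxS (S : ι → Set X) (f : X → ℝ≥0∞) {i : ι} {E : Set X}
    (hE : MeasurableSet E) (hES : E ⊆ S i) :
    avg μ (S i) f * μ E ≤ ∫⁻ x in E, maxS μ S f x ∂μ := by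
  rw [← setLIntegral_const]
  exact setLIntegral_mono' hE fun x hx => avg_le_maxS S f (hES hx)

theorem tsum_avg_mul_le_mul_setLIntegral_maxS [Countable ι] (S E : ι → Set X) (f : X → ℝ≥0∞)
    (τ : ℝ≥0∞) {p : ι → Prop} {Q : Set X} (hEmeas : ∀ i, MeasurableSet (E i)) (hsub : ∀ i, E i ⊆ S i)
    (hsparse : ∀ i, μ (S i) ≤ τ * μ (E i)) (hdisj : Pairwise (Function.onFun Disjoint E))
    (hEQ : ∀ i, p i → E i ⊆ Q) :
    ∑' i : {i // p i}, avg μ (S i) f * μ (S i) ≤ τ * ∫⁻ x in Q, maxS μ S f x ∂μ := by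
  calc ∑' i : {i // p i}, avg μ (S i) f * μ (S i)
      ≤ ∑' i : {i // p i}, τ * ∫⁻ x in E i, maxS μ S f x ∂μ := by
        refine ENNReal.tsum_le_tsum fun i => ?_
        calc avg μ (S i) f * μ (S i) ≤ avg μ (S i) f * (τ * μ (E i)) := by gcongr; exact hsparse i
          _ = τ * (avg μ (S i) f * μ (E i)) := mul_left_comm _ _ _
          _ ≤ τ * ∫⁻ x in E i, maxS μ S f x ∂μ := by
            gcongr; exact avg_mul_le_setLIntegral_maxS S f (hEmeas i) (hsub i)
    _ = τ * ∫⁻ x in ⋃ i : {i // p i}, E i, maxS μ S f x ∂μ := by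
        rw [ENNReal.tsum_mul_left, lintegral_iUnion (fun i : {i // p i} => hEmeas i)
          fun i j hij => hdisj (Subtype.coe_injective.ne hij)]
    _ ≤ τ * ∫⁻ x in Q, maxS μ S f x ∂μ := by
        gcongr
        exact iUnion_subset fun i => hEQ i i.2

end

theorem stmt8_general {X ι : Type*} [MeasurableSpace X] [Countable ι] (μ : Measure X)
    (S E : ι → Set X) (τ : ℝ≥0∞)
    (hSmeas : ∀ i, MeasurableSet (S i)) (hEmeas : ∀ i, MeasurableSet (E i))
    (hsub : ∀ i, E i ⊆ S i)
    (hsparse : ∀ i, μ (S i) ≤ τ * μ (E i))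
    (hdisj : Pairwise (Function.onFun Disjoint E))
    (i₀ : ι)
    (σ : X → ℝ≥0∞)
    (hσvol : ∀ i, 0 < ∫⁻ x in S i, σ x ∂μ ∧ (∫⁻ x in S i, σ x ∂μ) < ∞)
    (Binf : ℝ≥0∞)
    (hBinf : Binf = ⨆ i, (∫⁻ x in S i, maxS μ S (Set.indicator (S i) σ) x ∂μ) /
      ∫⁻ x in S i, σ x ∂μ) :
    (∑' i : {i // S i ⊆ S i₀}, avg μ (S i.1) σ * μ (S i.1)) ≤
        τ * ∫⁻ x in S i₀, maxS μ S (Set.indicator (S i₀) σ) x ∂μ ∧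
      τ * (∫⁻ x in S i₀, maxS μ S (Set.indicator (S i₀) σ) x ∂μ) ≤
        τ * Binf * ∫⁻ x in S i₀, σ x ∂μ := by
  constructor
  · calc (∑' i : {i // S i ⊆ S i₀}, avg μ (S i.1) σ * μ (S i.1))
        = ∑' i : {i // S i ⊆ S i₀}, avg μ (S i.1) ((S i₀).indicator σ) * μ (S i.1) := by
          refine tsum_congr fun i => ?_
          rw [avg_indicator_of_subset (hSmeas i.1) i.2]
      _ ≤ τ * ∫⁻ x in S i₀, maxS μ S ((S i₀).indicator σ) x ∂μ :=
          tsum_avg_mul_le_mul_setLIntegral_maxS S E _ τ hEmeas hsub hsparse hdisj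
            fun i hi => (hsub i).trans hi
  · have hB : (∫⁻ x in S i₀, maxS μ S ((S i₀).indicator σ) x ∂μ) / ∫⁻ x in S i₀, σ x ∂μ ≤ Binf :=
      hBinf ▸ le_iSup (fun i => (∫⁻ x in S i, maxS μ S ((S i).indicator σ) x ∂μ) /
        ∫⁻ x in S i, σ x ∂μ) i₀
    rw [mul_assoc]
    gcongr
    exact (ENNReal.div_le_iff (hσvol i₀).1.ne' (hσvol i₀).2.ne).1 hB

/-- Sparse sum bound: `∑_{Q ⊆ Q₀} ⟨σ⟩_Q |Q| ≤ τ ∫_{Q₀} M(σ1_{Q₀}) ≤ τ [σ]_{B_∞} σ(Q₀)`. -/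
theorem stmt8 {X ι : Type*} [MeasurableSpace X] [Countable ι] (μ : Measure X)
    (S E : ι → Set X) (τ : ℝ≥0∞) (hτ : 1 ≤ τ) (hτ' : τ ≠ ∞)
    (hSmeas : ∀ i, MeasurableSet (S i)) (hEmeas : ∀ i, MeasurableSet (E i))
    (hsub : ∀ i, E i ⊆ S i)
    (hvol : ∀ i, 0 < μ (S i) ∧ μ (S i) < ∞)
    (hsparse : ∀ i, μ (S i) ≤ τ * μ (E i))
    (hdisj : Pairwise (Function.onFun Disjoint E))
    (i₀ : ι)
    (hnest : ∀ i j, S i ⊆ S i₀ → S j ⊆ S i₀ →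
      S i ⊆ S j ∨ S j ⊆ S i ∨ Disjoint (S i) (S j))
    (σ : X → ℝ≥0∞) (hσ : Measurable σ)
    (hσvol : ∀ i, 0 < ∫⁻ x in S i, σ x ∂μ ∧ (∫⁻ x in S i, σ x ∂μ) < ∞)
    (Binf : ℝ≥0∞)
    (hBinf : Binf = ⨆ i, (∫⁻ x in S i, maxS μ S (Set.indicator (S i) σ) x ∂μ) /
      ∫⁻ x in S i, σ x ∂μ) :
    (∑' i : {i // S i ⊆ S i₀}, avg μ (S i.1) σ * μ (S i.1)) ≤
        τ * ∫⁻ x in S i₀, maxS μ S (Set.indicator (S i₀) σ) x ∂μ ∧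
      τ * (∫⁻ x in S i₀, maxS μ S (Set.indicator (S i₀) σ) x ∂μ) ≤
        τ * Binf * ∫⁻ x in S i₀, σ x ∂μ :=
  stmt8_general μ S E τ hSmeas hEmeas hsub hsparse hdisj i₀ σ hσvol Binf hBinf
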